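/- Let A, B be bounded linear operators on a complex Hilbert space H, K a nonempty set of unit vectors, ber(T)=sup_{k∈K}|⟨T k,k⟩|, ‖T‖_ber=sup_{k,l∈K}|⟨T k,l⟩|. Then ‖A² + B²‖_ber² ≤ ber(A*A + B*B) · ber(A A* + B B*). -/

import Mathlib

open ContinuousLinearMap

noncomputable def berNum {H : Type*} [NormedAddCommGroup H] [InnerProductSpace ℂ H]
    (K : Set H) (T : H →L[ℂ] H) : ℝ :=
  sSup {x : ℝ | ∃ k ∈ K, x = ‖(inner ℂ (T k) k : ℂ)‖}

noncomputable def berNorm {H : Type*} [NormedAddCommGroup H] [InnerProductSpace ℂ H]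
    (K : Set H) (T : H →L[ℂ] H) : ℝ :=
  sSup {x : ℝ | ∃ k ∈ K, ∃ l ∈ K, x = ‖(inner ℂ (T k) l : ℂ)‖}

/-!
Writing `⟪(A² + B²) k, l⟫ = ⟪A k, A† l⟫ + ⟪B k, B† l⟫`, the Cauchy–Schwarz inequality in `H × H`
bounds its square by `(‖A k‖² + ‖B k‖²) (‖A† l‖² + ‖B† l‖²)`. The two factors are exactly
`⟪(A†A + B†B) k, k⟫` and `⟪(AA† + BB†) l, l⟫`, hence at most the two Berezin numbers.
-/

section Berezin

variable {H : Type*} [NormedAddCommGroup H] [InnerProductSpace ℂ H]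

lemma berNum_nonneg (K : Set H) (T : H →L[ℂ] H) : 0 ≤ berNum K T :=
  Real.sSup_nonneg fun _ ⟨_, _, hx⟩ => hx ▸ norm_nonneg _

lemma berNorm_nonneg (K : Set H) (T : H →L[ℂ] H) : 0 ≤ berNorm K T :=
  Real.sSup_nonneg fun _ ⟨_, _, _, _, hx⟩ => hx ▸ norm_nonneg _

lemma norm_inner_apply_self_le_berNum {K : Set H} (hK : Bornology.IsBounded K)
    (T : H →L[ℂ] H) {k : H} (hk : k ∈ K) : ‖(inner ℂ (T k) k : ℂ)‖ ≤ berNum K T := by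
  obtain ⟨C, hC⟩ := isBounded_iff_forall_norm_le.1 hK
  refine le_csSup ⟨‖T‖ * C * C, ?_⟩ ⟨k, hk, rfl⟩
  rintro _ ⟨j, hj, rfl⟩
  calc ‖(inner ℂ (T j) j : ℂ)‖ ≤ ‖T j‖ * ‖j‖ := norm_inner_le_norm _ _
    _ ≤ ‖T‖ * ‖j‖ * ‖j‖ := by gcongr; exact T.le_opNorm j
    _ ≤ ‖T‖ * C * C := by
      have hjC := hC j hj
      have hC0 : 0 ≤ C := (norm_nonneg j).trans hjC
      gcongr

lemma berNorm_le {K : Set H} {T : H →L[ℂ] H} {c : ℝ} (hc : 0 ≤ c)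
    (h : ∀ k ∈ K, ∀ l ∈ K, ‖(inner ℂ (T k) l : ℂ)‖ ≤ c) : berNorm K T ≤ c :=
  Real.sSup_le (by rintro _ ⟨k, hk, l, hl, rfl⟩; exact h k hk l hl) hc

end Berezin

lemma norm_inner_add_inner_sq_le {E : Type*} [NormedAddCommGroup E] [InnerProductSpace ℂ E]
    (x y u v : E) :
    ‖(inner ℂ x u + inner ℂ y v : ℂ)‖ ^ 2 ≤ (‖x‖ ^ 2 + ‖y‖ ^ 2) * (‖u‖ ^ 2 + ‖v‖ ^ 2) := by
  have htri : ‖(inner ℂ x u + inner ℂ y v : ℂ)‖ ≤ ‖x‖ * ‖u‖ + ‖y‖ * ‖v‖ :=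
    (norm_add_le _ _).trans (add_le_add (norm_inner_le_norm _ _) (norm_inner_le_norm _ _))
  calc ‖(inner ℂ x u + inner ℂ y v : ℂ)‖ ^ 2 ≤ (‖x‖ * ‖u‖ + ‖y‖ * ‖v‖) ^ 2 := by gcongr
    _ ≤ (‖x‖ ^ 2 + ‖y‖ ^ 2) * (‖u‖ ^ 2 + ‖v‖ ^ 2) := by
      nlinarith [sq_nonneg (‖x‖ * ‖v‖ - ‖y‖ * ‖u‖)]

section Adjoint

variable {H : Type*} [NormedAddCommGroup H] [InnerProductSpace ℂ H] [CompleteSpace H]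

lemma inner_sq_add_sq_apply (A B : H →L[ℂ] H) (k l : H) :
    (inner ℂ ((A ^ 2 + B ^ 2) k) l : ℂ)
      = inner ℂ (A k) (adjoint A l) + inner ℂ (B k) (adjoint B l) := by
  simp only [add_apply, pow_two, mul_apply_eq_comp, inner_add_left, adjoint_inner_right]

lemma norm_inner_adjoint_mul_self_add_apply (A B : H →L[ℂ] H) (k : H) :
    ‖(inner ℂ ((adjoint A * A + adjoint B * B) k) k : ℂ)‖ = ‖A k‖ ^ 2 + ‖B k‖ ^ 2 := by
  have h : (inner ℂ ((adjoint A * A + adjoint B * B) k) k : ℂ)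
      = ((‖A k‖ ^ 2 + ‖B k‖ ^ 2 : ℝ) : ℂ) := by
    simp only [add_apply, mul_apply_eq_comp, inner_add_left, adjoint_inner_left,
      inner_self_eq_norm_sq_to_K]
    norm_cast
  rw [h, Complex.norm_real, Real.norm_of_nonneg (by positivity)]

lemma norm_inner_mul_adjoint_add_apply (A B : H →L[ℂ] H) (l : H) :
    ‖(inner ℂ ((A * adjoint A + B * adjoint B) l) l : ℂ)‖
      = ‖adjoint A l‖ ^ 2 + ‖adjoint B l‖ ^ 2 := by
  simpa only [adjoint_adjoint] using norm_inner_adjoint_mul_self_add_apply (adjoint A) (adjoint B) l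

end Adjoint

theorem berNorm_sq_add_sq_general {H : Type*} [NormedAddCommGroup H] [InnerProductSpace ℂ H] [CompleteSpace H]
    (A B : H →L[ℂ] H) (K : Set H) (hK1 : ∀ k ∈ K, ‖k‖ = 1) :
    (berNorm K (A ^ 2 + B ^ 2)) ^ 2
      ≤ berNum K (adjoint A * A + adjoint B * B) * berNum K (A * adjoint A + B * adjoint B) := by
  have hKb : Bornology.IsBounded K :=
    isBounded_iff_forall_norm_le.2 ⟨1, fun k hk => (hK1 k hk).le⟩
  have h₁ : ∀ k ∈ K, ‖A k‖ ^ 2 + ‖B k‖ ^ 2 ≤ berNum K (adjoint A * A + adjoint B * B) :=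
    fun k hk => norm_inner_adjoint_mul_self_add_apply A B k ▸
      norm_inner_apply_self_le_berNum hKb _ hk
  have h₂ : ∀ l ∈ K,
      ‖adjoint A l‖ ^ 2 + ‖adjoint B l‖ ^ 2 ≤ berNum K (A * adjoint A + B * adjoint B) :=
    fun l hl => norm_inner_mul_adjoint_add_apply A B l ▸
      norm_inner_apply_self_le_berNum hKb _ hl
  refine (Real.le_sqrt (berNorm_nonneg _ _)
    (mul_nonneg (berNum_nonneg _ _) (berNum_nonneg _ _))).1 ?_
  refine berNorm_le (Real.sqrt_nonneg _) fun k hk l hl => Real.le_sqrt_of_sq_le ?_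
  rw [inner_sq_add_sq_apply]
  exact (norm_inner_add_inner_sq_le _ _ _ _).trans
    (mul_le_mul (h₁ k hk) (h₂ l hl) (by positivity) (berNum_nonneg _ _))

theorem berNorm_sq_add_sq {H : Type*} [NormedAddCommGroup H] [InnerProductSpace ℂ H] [CompleteSpace H]
    (A B : H →L[ℂ] H) (K : Set H) (hK : K.Nonempty) (hK1 : ∀ k ∈ K, ‖k‖ = 1) :
    (berNorm K (A ^ 2 + B ^ 2)) ^ 2
      ≤ berNum K (adjoint A * A + adjoint B * B) * berNum K (A * adjoint A + B * adjoint B) :=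
  berNorm_sq_add_sq_general A B K hK1
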